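/- For all real parameters m > 0, k > 0, γ̄ > 0, there exists a unique γ₀ > 0 satisfying the OPRA cutoff equation ∫_{γ₀}^∞ (1/γ₀ − 1/γ) · f(γ) dγ = 1; moreover, the map γ₀ ↦ ∫_{γ₀}^∞ (1/γ₀ − 1/γ) f(γ) dγ is strictly decreasing on (0, ∞). -/

import Mathlib

open MeasureTheory Set

/-- Pochhammer symbol (rising factorial) `(m)_i = m(m+1)⋯(m+i−1)`. -/
noncomputable def poch (m : ℝ) (i : ℕ) : ℝ := ∏ j ∈ Finset.range i, (m + j)

/-- `n`-th harmonic number `H_n = ∑_{j=1}^n 1/j` (with `H_0 = 0`). -/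
noncomputable def harmonicR (n : ℕ) : ℝ := ∑ j ∈ Finset.range n, 1 / ((j : ℝ) + 1)

/-- Kummer confluent hypergeometric function `₁F₁(m, 1, z) = ∑_{i=0}^∞ ((m)_i/(i!)²) z^i`. -/
noncomputable def kummerM (m z : ℝ) : ℝ :=
  ∑' i : ℕ, poch m i / ((Nat.factorial i : ℝ) ^ 2) * z ^ i

/-- Kummer confluent hypergeometric function of the second kind
`U(a, b, z) = (1/Γ(a)) ∫₀^∞ e^{−zt} t^{a−1} (1+t)^{b−a−1} dt`. -/
noncomputable def kummerU (a b z : ℝ) : ℝ :=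
  (1 / Real.Gamma a) *
    ∫ t in Ioi (0 : ℝ), Real.exp (-z * t) * t ^ (a - 1) * (1 + t) ^ (b - a - 1)

/-- Conditional SNR density of the fdRLoS channel,
`f(γ|x)` with `k_x = k/x`, `γ̄_x = ((k+x)/(k+1))·γ̄`. -/
noncomputable def condPdf (m k γb x γ : ℝ) : ℝ :=
  (m ^ m * (1 + k / x)) / ((m + k / x) ^ m * ((k + x) / (k + 1) * γb)) *
    Real.exp (-((1 + k / x) / ((k + x) / (k + 1) * γb)) * γ) *
    kummerM m ((k / x) * (1 + k / x) / (k / x + m) * (γ / ((k + x) / (k + 1) * γb)))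

/-- Unconditional SNR density of the fdRLoS channel, `f(γ) = ∫₀^∞ f(γ|x) e^{−x} dx`. -/
noncomputable def pdfSNR (m k γb γ : ℝ) : ℝ :=
  ∫ x in Ioi (0 : ℝ), condPdf m k γb x γ * Real.exp (-x)

open scoped ENNReal NNReal

lemma poch_zero (m : ℝ) : poch m 0 = 1 := by simp [poch]

lemma poch_succ (m : ℝ) (i : ℕ) : poch m (i + 1) = poch m i * (m + i) :=
  Finset.prod_range_succ _ _

lemma poch_pos {m : ℝ} (hm : 0 < m) (i : ℕ) : 0 < poch m i :=
  Finset.prod_pos fun j _ => by positivity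

lemma poch_mono {m m' : ℝ} (hm : 0 < m) (h : m ≤ m') (i : ℕ) : poch m i ≤ poch m' i :=
  Finset.prod_le_prod (fun j _ => by positivity) (fun j _ => by linarith)

lemma poch_le {m : ℝ} (hm : 0 < m) (i : ℕ) :
    poch m i ≤ (max 1 m) ^ i * (Nat.factorial i : ℝ) := by
  induction i with
  | zero => simp [poch_zero]
  | succ n ih =>
    rw [poch_succ, pow_succ, Nat.factorial_succ]
    have h1 : m + n ≤ max 1 m * (n + 1) := by
      rcases le_total m 1 with h | h
      · rw [max_eq_left h]; push_cast; linarith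
      · rw [max_eq_right h]; have hn : (0:ℝ) ≤ n := Nat.cast_nonneg n; nlinarith
    have h2 : (0:ℝ) < max 1 m := lt_of_lt_of_le one_pos (le_max_left _ _)
    calc poch m n * (m + n) ≤ (max 1 m ^ n * (Nat.factorial n : ℝ)) * (max 1 m * (n + 1)) := by
          apply mul_le_mul ih h1 (by positivity) (by positivity)
      _ = max 1 m ^ n * max 1 m * ((n + 1) * (Nat.factorial n : ℝ)) := by ring
      _ = max 1 m ^ n * max 1 m * ((Nat.factorial (n+1) : ℝ)) := by
          rw [Nat.factorial_succ]; push_cast; ring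

lemma kummer_term_bound {m : ℝ} (hm : 0 < m) (z : ℝ) (i : ℕ) :
    ‖poch m i / ((Nat.factorial i : ℝ) ^ 2) * z ^ i‖ ≤
      (max 1 m * |z|) ^ i / (Nat.factorial i : ℝ) := by
  have hfac : (0:ℝ) < (Nat.factorial i : ℝ) := by exact_mod_cast Nat.factorial_pos i
  have h0 : ‖poch m i / ((Nat.factorial i : ℝ) ^ 2) * z ^ i‖ =
      poch m i / ((Nat.factorial i : ℝ) ^ 2) * |z| ^ i := by
    rw [norm_mul, norm_pow, Real.norm_eq_abs, Real.norm_eq_abs,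
      abs_of_pos (div_pos (poch_pos hm i) (by positivity))]
  rw [h0, div_mul_eq_mul_div, mul_pow, pow_two]
  rw [div_le_div_iff₀ (by positivity) hfac]
  have h1 : poch m i * |z| ^ i ≤ ((max 1 m) ^ i * (Nat.factorial i : ℝ)) * |z| ^ i :=
    mul_le_mul_of_nonneg_right (poch_le hm i) (by positivity)
  calc poch m i * |z| ^ i * (Nat.factorial i : ℝ)
      ≤ ((max 1 m) ^ i * (Nat.factorial i : ℝ)) * |z| ^ i * (Nat.factorial i : ℝ) :=
        mul_le_mul_of_nonneg_right h1 hfac.le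
    _ = max 1 m ^ i * |z| ^ i * ((Nat.factorial i : ℝ) * (Nat.factorial i : ℝ)) := by ring

lemma kummer_summable {m : ℝ} (hm : 0 < m) (z : ℝ) :
    Summable (fun i : ℕ => poch m i / ((Nat.factorial i : ℝ) ^ 2) * z ^ i) := by
  apply Summable.of_norm_bounded (Real.summable_pow_div_factorial (max 1 m * |z|))
  exact kummer_term_bound hm z

lemma one_le_kummerM {m : ℝ} (hm : 0 < m) {z : ℝ} (hz : 0 ≤ z) : 1 ≤ kummerM m z := by
  have h := Summable.le_tsum (kummer_summable hm z) 0 (fun i _ =>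
    mul_nonneg (div_nonneg (poch_pos hm i).le (by positivity)) (pow_nonneg hz i))
  simpa [kummerM, poch_zero] using h

lemma kummerM_pos {m : ℝ} (hm : 0 < m) {z : ℝ} (hz : 0 ≤ z) : 0 < kummerM m z :=
  lt_of_lt_of_le one_pos (one_le_kummerM hm hz)

lemma continuous_kummerM {m : ℝ} (hm : 0 < m) : Continuous (kummerM m) := by
  rw [continuous_iff_continuousAt]
  intro z₀
  set C := max 1 m with hC
  have hC0 : (0:ℝ) < C := lt_of_lt_of_le one_pos (le_max_left _ _)
  set R := |z₀| + 1 with hR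
  have hR0 : (0:ℝ) < R := by positivity
  have hcont : ContinuousOn (kummerM m) (Metric.ball (0:ℝ) R) := by
    unfold kummerM
    apply continuousOn_tsum (u := fun i : ℕ => (C * R) ^ i / (Nat.factorial i : ℝ))
      (fun i => (Continuous.continuousOn (by continuity)))
      (Real.summable_pow_div_factorial _)
    intro n x hx
    have hx' : |x| ≤ R := by
      have := Metric.mem_ball.mp hx
      rw [Real.dist_eq, sub_zero] at this
      linarith
    refine (kummer_term_bound hm x n).trans ?_
    have hC0' : (0:ℝ) ≤ C := hC0.le
    gcongr
  exact hcont.continuousAt (Metric.isOpen_ball.mem_nhds (by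
    simp only [Metric.mem_ball, Real.dist_eq, sub_zero]; linarith))


open scoped ENNReal

lemma lintegral_pow_exp {A : ℝ} (hA : 0 < A) (i : ℕ) :
    ∫⁻ γ in Ioi (0:ℝ), ENNReal.ofReal (γ ^ i * Real.exp (-(A * γ))) =
      ENNReal.ofReal ((Nat.factorial i : ℝ) / A ^ (i + 1)) := by
  have hInt : IntegrableOn (fun γ : ℝ => γ ^ i * Real.exp (-(A * γ))) (Ioi 0) := by
    have h := integrableOn_rpow_mul_exp_neg_mul_rpow (s := (i : ℝ)) (p := 1)
      (by exact_mod_cast neg_one_lt_zero.trans_le (Nat.cast_nonneg i)) one_pos hA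
    apply h.congr_fun ?_ measurableSet_Ioi
    intro x hx
    simp [Real.rpow_one, Real.rpow_natCast, neg_mul]
  have hval : ∫ γ in Ioi (0:ℝ), γ ^ i * Real.exp (-(A * γ)) =
      (Nat.factorial i : ℝ) / A ^ (i + 1) := by
    have h := Real.integral_rpow_mul_exp_neg_mul_Ioi (a := (i : ℝ) + 1) (r := A)
      (by positivity) hA
    simp only [add_sub_cancel_right] at h
    have hcg : ∫ γ in Ioi (0:ℝ), γ ^ i * Real.exp (-(A * γ)) =
        ∫ t in Ioi (0:ℝ), t ^ (i : ℝ) * Real.exp (-(A * t)) := by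
      apply setIntegral_congr_fun measurableSet_Ioi
      intro x hx
      simp [Real.rpow_natCast]
    rw [hcg, h, Real.Gamma_nat_eq_factorial i]
    rw [show ((i:ℝ) + 1) = ((i + 1 : ℕ) : ℝ) by push_cast; ring, Real.rpow_natCast]
    rw [one_div, inv_pow, inv_mul_eq_div]
  rw [← ofReal_integral_eq_lintegral_ofReal hInt ?_, hval]
  filter_upwards [ae_restrict_mem measurableSet_Ioi] with γ hγ
  have : (0:ℝ) < γ := hγ
  positivity

lemma poch_natCast (M : ℕ) (i : ℕ) : poch ((M : ℕ) : ℝ) i = ((Nat.ascFactorial M i : ℕ) : ℝ) := by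
  induction i with
  | zero => simp [poch_zero]
  | succ n ih => rw [poch_succ, ih, Nat.ascFactorial_succ]; push_cast; ring

lemma key_bound {m : ℝ} (hm : 0 < m) {P A τ : ℝ} (hP : 0 ≤ P) (hA : 0 < A)
    (hτ0 : 0 ≤ τ) (hτ1 : τ < 1) :
    ∫⁻ γ in Ioi (0:ℝ), ENNReal.ofReal (P * Real.exp (-(A * γ)) * kummerM m (τ * A * γ))
      ≤ ENNReal.ofReal (P / A * (1 / (1 - τ)) ^ ⌈m⌉₊) := by
  set M := ⌈m⌉₊ with hMdef
  have hMm : m ≤ (M : ℝ) := Nat.le_ceil m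
  have hM1 : 1 ≤ M := Nat.ceil_pos.mpr hm
  set u : ℕ → ℝ → ℝ := fun i γ =>
    (P * (poch m i / ((Nat.factorial i : ℝ) ^ 2)) * (τ * A) ^ i) *
      (γ ^ i * Real.exp (-(A * γ))) with hu
  have hterm_nonneg : ∀ i (γ : ℝ), 0 < γ → 0 ≤ u i γ := by
    intro i γ hγ
    have h1 := (poch_pos hm i).le
    have h2 : (0:ℝ) ≤ τ * A := by positivity
    positivity
  have hcoef_nonneg : ∀ i : ℕ, 0 ≤ P * (poch m i / ((Nat.factorial i : ℝ) ^ 2)) * (τ * A) ^ i := by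
    intro i
    have h1 := (poch_pos hm i).le
    have h2 : (0:ℝ) ≤ τ * A := by positivity
    positivity
  have hsum : ∀ γ : ℝ, Summable (fun i => u i γ) := by
    intro γ
    apply Summable.congr (((kummer_summable hm (τ * A * γ)).mul_left
      (P * Real.exp (-(A * γ)))))
    intro i
    rw [hu]
    simp only []
    rw [mul_pow, mul_pow]
    ring
  calc ∫⁻ γ in Ioi (0:ℝ), ENNReal.ofReal (P * Real.exp (-(A * γ)) * kummerM m (τ * A * γ))
      = ∫⁻ γ in Ioi (0:ℝ), ∑' i, ENNReal.ofReal (u i γ) := by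
        apply setLIntegral_congr_fun measurableSet_Ioi
        intro γ hγ
        have hre : P * Real.exp (-(A * γ)) * kummerM m (τ * A * γ) = ∑' i, u i γ := by
          rw [kummerM, ← tsum_mul_left]
          apply tsum_congr
          intro i
          rw [hu]
          simp only []
          rw [mul_pow, mul_pow]
          ring
        beta_reduce
        rw [hre, ENNReal.ofReal_tsum_of_nonneg (fun i => hterm_nonneg i γ hγ) (hsum γ)]
    _ = ∑' i, ∫⁻ γ in Ioi (0:ℝ), ENNReal.ofReal (u i γ) := by
        apply lintegral_tsum
        intro i
        apply Measurable.aemeasurable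
        apply Measurable.ennreal_ofReal
        fun_prop
    _ ≤ ∑' i : ℕ, ENNReal.ofReal ((P / A) * (((i + (M - 1)).choose (M - 1) : ℝ) * τ ^ i)) := by
        apply ENNReal.tsum_le_tsum
        intro i
        have hfac : (0:ℝ) < (Nat.factorial i : ℝ) := by exact_mod_cast Nat.factorial_pos i
        have step1 : ∀ γ : ℝ, ENNReal.ofReal (u i γ) =
            ENNReal.ofReal (P * (poch m i / ((Nat.factorial i : ℝ) ^ 2)) * (τ * A) ^ i) *
              ENNReal.ofReal (γ ^ i * Real.exp (-(A * γ))) := by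
          intro γ
          rw [hu]
          simp only []
          rw [ENNReal.ofReal_mul (hcoef_nonneg i)]
        simp only [step1]
        rw [lintegral_const_mul' _ _ ENNReal.ofReal_ne_top, lintegral_pow_exp hA i,
          ← ENNReal.ofReal_mul (hcoef_nonneg i)]
        apply ENNReal.ofReal_le_ofReal
        have hident : P * (poch m i / ((Nat.factorial i : ℝ) ^ 2)) * (τ * A) ^ i *
            ((Nat.factorial i : ℝ) / A ^ (i + 1)) =
            (P / A) * ((poch m i / (Nat.factorial i : ℝ)) * τ ^ i) := by
          rw [mul_pow, pow_succ]
          field_simp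
          ring
        rw [hident]
        have hpoch : poch m i / (Nat.factorial i : ℝ) ≤ ((i + (M - 1)).choose (M - 1) : ℝ) := by
          rw [div_le_iff₀ hfac]
          have h1 : poch m i ≤ poch (M : ℝ) i := poch_mono hm hMm i
          have h2 : poch ((M : ℕ) : ℝ) i = ((Nat.ascFactorial M i : ℕ) : ℝ) := poch_natCast M i
          have h3 : Nat.ascFactorial M i = Nat.factorial i * (i + (M - 1)).choose (M - 1) := by
            have hM' : M - 1 + 1 = M := Nat.succ_pred_eq_of_pos hM1
            have := Nat.ascFactorial_eq_factorial_mul_choose (M - 1) i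
            rw [hM'] at this
            rw [this]
            congr 1
            have h4 := Nat.choose_symm (Nat.le_add_right i (M - 1) : i ≤ i + (M - 1))
            rw [Nat.add_sub_cancel_left] at h4
            rw [Nat.add_comm (M - 1) i, h4]
          calc poch m i ≤ ((Nat.ascFactorial M i : ℕ) : ℝ) := h2 ▸ h1
            _ = (Nat.factorial i : ℝ) * ((i + (M - 1)).choose (M - 1) : ℝ) := by
                rw [h3]; push_cast; ring
            _ = ((i + (M - 1)).choose (M - 1) : ℝ) * (Nat.factorial i : ℝ) := by ring
        exact mul_le_mul_of_nonneg_left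
          (mul_le_mul_of_nonneg_right hpoch (pow_nonneg hτ0 i))
          (div_nonneg hP hA.le)
    _ = ENNReal.ofReal (P / A * (1 / (1 - τ)) ^ M) := by
        have hτn : ‖τ‖ < 1 := by rw [Real.norm_eq_abs, abs_of_nonneg hτ0]; exact hτ1
        have hs := hasSum_choose_mul_geometric_of_norm_lt_one (𝕜 := ℝ) (M - 1) hτn
        have hs2 := hs.mul_left (P / A)
        rw [← ENNReal.ofReal_tsum_of_nonneg (fun i => mul_nonneg (div_nonneg hP hA.le)
          (mul_nonneg (Nat.cast_nonneg _) (pow_nonneg hτ0 i))) hs2.summable]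
        rw [hs2.tsum_eq]
        congr 1
        have hM' : M - 1 + 1 = M := by omega
        rw [hM', div_pow, one_pow]

section main

variable {m k γb : ℝ} (hm : 0 < m) (hk : 0 < k) (hγb : 0 < γb)

set_option linter.unusedVariables false

lemma condPdf_eq (x γ : ℝ) :
    condPdf m k γb x γ =
      (m ^ m * (1 + k / x)) / ((m + k / x) ^ m * ((k + x) / (k + 1) * γb)) *
        Real.exp (-(((1 + k / x) / ((k + x) / (k + 1) * γb)) * γ)) *
        kummerM m ((k / x / (k / x + m)) *
          ((1 + k / x) / ((k + x) / (k + 1) * γb)) * γ) := by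
  unfold condPdf
  rw [neg_mul, show (k / x) * (1 + k / x) / (k / x + m) * (γ / ((k + x) / (k + 1) * γb)) =
    (k / x / (k / x + m)) * ((1 + k / x) / ((k + x) / (k + 1) * γb)) * γ from by ring]

include hm hk hγb in
lemma aux_pos {x : ℝ} (hx : 0 < x) :
    0 < (k + x) / (k + 1) * γb ∧ 0 < 1 + k / x ∧ 0 < m + k / x ∧
      0 < (m ^ m * (1 + k / x)) / ((m + k / x) ^ m * ((k + x) / (k + 1) * γb)) ∧
      0 < (1 + k / x) / ((k + x) / (k + 1) * γb) ∧
      0 ≤ k / x / (k / x + m) ∧ k / x / (k / x + m) < 1 := by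
  have hκ : 0 < k / x := div_pos hk hx
  have hG : 0 < (k + x) / (k + 1) * γb := by positivity
  have h1κ : 0 < 1 + k / x := by positivity
  have hmκ : 0 < m + k / x := by positivity
  have hmm : 0 < m ^ m := Real.rpow_pos_of_pos hm m
  have hmκm : 0 < (m + k / x) ^ m := Real.rpow_pos_of_pos hmκ m
  refine ⟨hG, h1κ, hmκ, by positivity, by positivity, by positivity, ?_⟩
  rw [div_lt_one (by positivity)]
  linarith

include hm hk hγb in
lemma condPdf_pos {x γ : ℝ} (hx : 0 < x) (hγ : 0 ≤ γ) : 0 < condPdf m k γb x γ := by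
  obtain ⟨hG, h1κ, hmκ, hP, hA, hτ0, hτ1⟩ := aux_pos hm hk hγb hx
  rw [condPdf_eq]
  have harg : 0 ≤ (k / x / (k / x + m)) * ((1 + k / x) / ((k + x) / (k + 1) * γb)) * γ := by
    have := hA.le
    positivity
  exact mul_pos (mul_pos hP (Real.exp_pos _)) (kummerM_pos hm harg)

include hm hk hγb in
lemma condPdf_nonneg {x γ : ℝ} (hx : 0 < x) (hγ : 0 ≤ γ) : 0 ≤ condPdf m k γb x γ :=
  (condPdf_pos hm hk hγb hx hγ).le

include hm hk hγb in
lemma condPdf_lintegral_bound {x : ℝ} (hx : 0 < x) :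
    ∫⁻ γ in Ioi (0:ℝ), ENNReal.ofReal (condPdf m k γb x γ)
      ≤ ENNReal.ofReal (((k / x + m) / m) ^ ((⌈m⌉₊ : ℝ) - m)) := by
  obtain ⟨hG, h1κ, hmκ, hP, hA, hτ0, hτ1⟩ := aux_pos hm hk hγb hx
  set M := ⌈m⌉₊ with hM
  have hstep : ∫⁻ γ in Ioi (0:ℝ), ENNReal.ofReal (condPdf m k γb x γ)
      ≤ ENNReal.ofReal ((m ^ m * (1 + k / x)) / ((m + k / x) ^ m * ((k + x) / (k + 1) * γb)) /
          ((1 + k / x) / ((k + x) / (k + 1) * γb)) *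
          (1 / (1 - k / x / (k / x + m))) ^ M) := by
    have := key_bound (P := (m ^ m * (1 + k / x)) / ((m + k / x) ^ m * ((k + x) / (k + 1) * γb)))
      (A := (1 + k / x) / ((k + x) / (k + 1) * γb))
      (τ := k / x / (k / x + m)) hm hP.le hA hτ0 hτ1
    refine le_trans (le_of_eq ?_) this
    apply lintegral_congr_ae
    apply ae_of_all
    intro γ
    simp only []
    rw [condPdf_eq]
  refine hstep.trans (le_of_eq ?_)
  congr 1
  have hκ : 0 < k / x := div_pos hk hx
  have hw : 0 < (k / x + m) / m := by positivity
  have hmm : 0 < m ^ m := Real.rpow_pos_of_pos hm m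
  have hwm : 0 < ((k / x + m) / m) ^ m := Real.rpow_pos_of_pos hw m
  have e1 : (m ^ m * (1 + k / x)) / ((m + k / x) ^ m * ((k + x) / (k + 1) * γb)) /
      ((1 + k / x) / ((k + x) / (k + 1) * γb)) = m ^ m / (m + k / x) ^ m := by
    have hmκm : 0 < (m + k / x) ^ m := Real.rpow_pos_of_pos hmκ m
    field_simp
  have e2 : 1 - k / x / (k / x + m) = m / (k / x + m) := by
    field_simp
    ring
  have e3 : (m + k / x) ^ m = ((k / x + m) / m) ^ m * m ^ m := by
    rw [← Real.mul_rpow hw.le hm.le]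
    congr 1
    field_simp
    ring
  rw [e1, e2, e3]
  rw [one_div, inv_div, ← Real.rpow_natCast ((k / x + m) / m) M,
    show (M : ℝ) - m = (M : ℝ) + (-m) from by ring, Real.rpow_add hw,
    Real.rpow_neg hw.le]
  field_simp



include hm hk in
lemma bound_le_majorant {x : ℝ} (hx : 0 < x) :
    ((k / x + m) / m) ^ ((⌈m⌉₊ : ℝ) - m) ≤
      ((k + m) / m) ^ ((⌈m⌉₊ : ℝ) - m) * (1 + x ^ (-((⌈m⌉₊ : ℝ) - m))) := by
  set δ := (⌈m⌉₊ : ℝ) - m with hδ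
  have hδ0 : 0 ≤ δ := sub_nonneg.mpr (Nat.le_ceil m)
  have hw0 : 0 ≤ (k / x + m) / m := by positivity
  have hC0 : 0 ≤ ((k + m) / m) ^ δ := Real.rpow_nonneg (by positivity) δ
  have hxneg : 0 ≤ x ^ (-δ) := Real.rpow_nonneg hx.le _
  rcases le_total 1 x with hx1 | hx1
  · have hbase : (k / x + m) / m ≤ (k + m) / m := by
      have h : k / x ≤ k := div_le_self hk.le hx1
      gcongr
    calc ((k / x + m) / m) ^ δ ≤ ((k + m) / m) ^ δ :=
          Real.rpow_le_rpow hw0 hbase hδ0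
      _ = ((k + m) / m) ^ δ * 1 := (mul_one _).symm
      _ ≤ ((k + m) / m) ^ δ * (1 + x ^ (-δ)) := by
          apply mul_le_mul_of_nonneg_left (by linarith) hC0
  · have hbase : (k / x + m) / m ≤ ((k + m) / m) * x⁻¹ := by
      have hxinv : (1:ℝ) ≤ x⁻¹ := (one_le_inv₀ hx).mpr hx1
      have key : k / x + m ≤ (k + m) * x⁻¹ := by
        have h1 : m ≤ m * x⁻¹ := by nlinarith
        have h2 : k / x = k * x⁻¹ := div_eq_mul_inv k x
        nlinarith
      rw [show (k + m) / m * x⁻¹ = ((k + m) * x⁻¹) / m from by ring]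
      gcongr
    calc ((k / x + m) / m) ^ δ ≤ (((k + m) / m) * x⁻¹) ^ δ :=
          Real.rpow_le_rpow hw0 hbase hδ0
      _ = ((k + m) / m) ^ δ * x ^ (-δ) := by
          rw [Real.mul_rpow (by positivity) (by positivity), Real.inv_rpow hx.le,
            ← Real.rpow_neg hx.le]
      _ ≤ ((k + m) / m) ^ δ * (1 + x ^ (-δ)) := by
          apply mul_le_mul_of_nonneg_left (by linarith) hC0

include hm in
lemma majorant_integrable :
    IntegrableOn (fun x : ℝ => ((k + m) / m) ^ ((⌈m⌉₊ : ℝ) - m) *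
      (1 + x ^ (-((⌈m⌉₊ : ℝ) - m))) * Real.exp (-x)) (Ioi 0) := by
  set δ := (⌈m⌉₊ : ℝ) - m with hδ
  have hδ1 : δ < 1 := by
    have := Nat.ceil_lt_add_one hm.le
    simp only [hδ]
    linarith
  have h1 : IntegrableOn (fun x : ℝ => Real.exp (-x)) (Ioi 0) := by
    have := exp_neg_integrableOn_Ioi 0 one_pos
    apply this.congr_fun ?_ measurableSet_Ioi
    intro x _
    norm_num
  have h2 : IntegrableOn (fun x : ℝ => Real.exp (-x) * x ^ (-δ)) (Ioi 0) := by
    have h := Real.GammaIntegral_convergent (s := 1 - δ) (by linarith)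
    have he : (1 : ℝ) - δ - 1 = -δ := by ring
    rw [he] at h
    exact h
  have h3 : IntegrableOn (fun x : ℝ => ((k + m) / m) ^ δ *
      (Real.exp (-x) + Real.exp (-x) * x ^ (-δ))) (Ioi 0) :=
    (h1.add h2).const_mul (((k + m) / m) ^ δ)
  apply h3.congr_fun ?_ measurableSet_Ioi
  intro x _
  simp only []
  ring



include hm in
lemma measurable_joint :
    Measurable (fun p : ℝ × ℝ => condPdf m k γb p.1 p.2 * Real.exp (-p.1)) := by
  unfold condPdf
  have hkum : Measurable (fun p : ℝ × ℝ => kummerM m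
      ((k / p.1) * (1 + k / p.1) / (k / p.1 + m) * (p.2 / ((k + p.1) / (k + 1) * γb)))) :=
    (continuous_kummerM hm).measurable.comp (by fun_prop)
  have h1 : Measurable (fun p : ℝ × ℝ =>
      (m ^ m * (1 + k / p.1)) / ((m + k / p.1) ^ m * ((k + p.1) / (k + 1) * γb))) := by
    fun_prop
  have h2 : Measurable (fun p : ℝ × ℝ =>
      Real.exp (-((1 + k / p.1) / ((k + p.1) / (k + 1) * γb)) * p.2)) := by fun_prop
  have h3 : Measurable (fun p : ℝ × ℝ => Real.exp (-p.1)) := by fun_prop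
  exact ((h1.mul h2).mul hkum).mul h3

include hm hk hγb in
lemma integrable_joint :
    Integrable (fun p : ℝ × ℝ => condPdf m k γb p.1 p.2 * Real.exp (-p.1))
      ((volume.restrict (Ioi 0)).prod (volume.restrict (Ioi 0))) := by
  set μ := volume.restrict (Ioi (0:ℝ)) with hμ
  have hmeas := measurable_joint (k := k) (γb := γb) hm
  refine ⟨hmeas.aestronglyMeasurable, ?_⟩
  show (∫⁻ p, ↑‖condPdf m k γb p.1 p.2 * Real.exp (-p.1)‖₊ ∂(μ.prod μ)) < ⊤
  rw [lintegral_prod _ hmeas.nnnorm.coe_nnreal_ennreal.aemeasurable]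
  have hbound : ∀ᵐ x ∂μ, (∫⁻ γ, ↑‖condPdf m k γb x γ * Real.exp (-x)‖₊ ∂μ) ≤
      ENNReal.ofReal ((((k + m) / m) ^ ((⌈m⌉₊ : ℝ) - m) *
        (1 + x ^ (-((⌈m⌉₊ : ℝ) - m)))) * Real.exp (-x)) := by
    filter_upwards [ae_restrict_mem measurableSet_Ioi] with x hx
    have hx' : (0:ℝ) < x := hx
    have hinner : (∫⁻ γ, ↑‖condPdf m k γb x γ * Real.exp (-x)‖₊ ∂μ) =
        (∫⁻ γ in Ioi (0:ℝ), ENNReal.ofReal (condPdf m k γb x γ)) * ENNReal.ofReal (Real.exp (-x)) := by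
      rw [hμ, ← lintegral_mul_const' _ _ ENNReal.ofReal_ne_top]
      apply lintegral_congr_ae
      filter_upwards [ae_restrict_mem measurableSet_Ioi] with γ hγ
      have hγ' : (0:ℝ) < γ := hγ
      rw [← ENNReal.ofReal_mul (condPdf_nonneg hm hk hγb hx' hγ'.le)]
      exact Real.enorm_eq_ofReal (mul_nonneg (condPdf_nonneg hm hk hγb hx' hγ'.le)
        (Real.exp_pos _).le)
    rw [hinner]
    calc (∫⁻ γ in Ioi (0:ℝ), ENNReal.ofReal (condPdf m k γb x γ)) * ENNReal.ofReal (Real.exp (-x))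
        ≤ ENNReal.ofReal (((k / x + m) / m) ^ ((⌈m⌉₊ : ℝ) - m)) * ENNReal.ofReal (Real.exp (-x)) :=
          mul_le_mul_left (condPdf_lintegral_bound hm hk hγb hx') _
      _ ≤ ENNReal.ofReal ((((k + m) / m) ^ ((⌈m⌉₊ : ℝ) - m) *
            (1 + x ^ (-((⌈m⌉₊ : ℝ) - m))))) * ENNReal.ofReal (Real.exp (-x)) :=
          mul_le_mul_left (ENNReal.ofReal_le_ofReal (bound_le_majorant hm hk hx')) _
      _ = ENNReal.ofReal ((((k + m) / m) ^ ((⌈m⌉₊ : ℝ) - m) *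
            (1 + x ^ (-((⌈m⌉₊ : ℝ) - m)))) * Real.exp (-x)) := by
          exact (ENNReal.ofReal_mul (by positivity)).symm
  calc (∫⁻ x, ∫⁻ γ, ↑‖condPdf m k γb x γ * Real.exp (-x)‖₊ ∂μ ∂μ)
      ≤ ∫⁻ x, ENNReal.ofReal ((((k + m) / m) ^ ((⌈m⌉₊ : ℝ) - m) *
          (1 + x ^ (-((⌈m⌉₊ : ℝ) - m)))) * Real.exp (-x)) ∂μ := lintegral_mono_ae hbound
    _ < ⊤ := (majorant_integrable (k := k) hm).setLIntegral_lt_top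

include hm hk hγb in
lemma pdfSNR_integrableOn : IntegrableOn (pdfSNR m k γb) (Ioi 0) := by
  have h := (integrable_joint hm hk hγb).integral_prod_right
  exact h

include hm hk hγb in
lemma pdfSNR_pos_ae : ∀ᵐ γ ∂(volume.restrict (Ioi (0:ℝ))), 0 < pdfSNR m k γb γ := by
  have hae := (integrable_joint hm hk hγb).prod_left_ae
  filter_upwards [hae, ae_restrict_mem measurableSet_Ioi] with γ hint hγ
  have hγ' : (0:ℝ) < γ := hγ
  have hpos : ∀ x ∈ Ioi (0:ℝ), 0 < condPdf m k γb x γ * Real.exp (-x) := fun x hx =>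
    mul_pos (condPdf_pos hm hk hγb hx hγ'.le) (Real.exp_pos _)
  have hnn : 0 ≤ᵐ[volume.restrict (Ioi (0:ℝ))] fun x => condPdf m k γb x γ * Real.exp (-x) := by
    filter_upwards [ae_restrict_mem measurableSet_Ioi] with x hx
    exact (hpos x hx).le
  rw [show pdfSNR m k γb γ = ∫ x in Ioi (0:ℝ), condPdf m k γb x γ * Real.exp (-x) from rfl]
  rw [setIntegral_pos_iff_support_of_nonneg_ae hnn hint]
  have hsub : Ioi (0:ℝ) ⊆ Function.support (fun x => condPdf m k γb x γ * Real.exp (-x)) ∩ Ioi 0 :=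
    fun x hx => ⟨ne_of_gt (hpos x hx), hx⟩
  calc (0:ℝ≥0∞) < volume (Ioi (0:ℝ)) := by rw [Real.volume_Ioi]; exact ENNReal.zero_lt_top
    _ ≤ volume (Function.support (fun x => condPdf m k γb x γ * Real.exp (-x)) ∩ Ioi 0) :=
        measure_mono hsub


include hm hk hγb in
lemma pdfSNR_nonneg_ae : 0 ≤ᵐ[volume.restrict (Ioi (0:ℝ))] pdfSNR m k γb := by
  filter_upwards [pdfSNR_pos_ae hm hk hγb] with γ h using h.le

include hm hk hγb in
lemma integrableOn_W {p : ℝ} (hp : 0 < p) :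
    IntegrableOn (fun γ => (1 / p - 1 / γ) * pdfSNR m k γb γ) (Ioi p) := by
  have hfp : IntegrableOn (pdfSNR m k γb) (Ioi p) :=
    (pdfSNR_integrableOn hm hk hγb).mono_set (Ioi_subset_Ioi hp.le)
  apply Integrable.mono' (hfp.norm.const_mul (1 / p))
  · exact ((by fun_prop : Measurable fun γ : ℝ => 1 / p - 1 / γ).aestronglyMeasurable).mul hfp.1
  · filter_upwards [ae_restrict_mem measurableSet_Ioi] with γ hγ
    have hγp : p < γ := hγ
    have h1 : 1 / γ ≤ 1 / p := one_div_le_one_div_of_le hp hγp.le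
    have h2 : 0 < 1 / γ := one_div_pos.mpr (hp.trans hγp)
    rw [norm_mul, Real.norm_eq_abs (1 / p - 1 / γ), abs_of_nonneg (by linarith)]
    apply mul_le_mul_of_nonneg_right (by linarith) (norm_nonneg _)

include hm hk hγb in
lemma integrableOn_inv_mul {p : ℝ} (hp : 0 < p) :
    IntegrableOn (fun γ => 1 / γ * pdfSNR m k γb γ) (Ioi p) := by
  have hfp : IntegrableOn (pdfSNR m k γb) (Ioi p) :=
    (pdfSNR_integrableOn hm hk hγb).mono_set (Ioi_subset_Ioi hp.le)
  apply Integrable.mono' (hfp.norm.const_mul (1 / p))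
  · exact ((by fun_prop : Measurable fun γ : ℝ => 1 / γ).aestronglyMeasurable).mul hfp.1
  · filter_upwards [ae_restrict_mem measurableSet_Ioi] with γ hγ
    have hγp : p < γ := hγ
    have h1 : 1 / γ ≤ 1 / p := one_div_le_one_div_of_le hp hγp.le
    have h2 : 0 < 1 / γ := one_div_pos.mpr (hp.trans hγp)
    rw [norm_mul, Real.norm_eq_abs (1 / γ), abs_of_nonneg h2.le]
    apply mul_le_mul_of_nonneg_right h1 (norm_nonneg _)

include hm hk hγb in
lemma setIntegral_pdfSNR_pos {q : ℝ} (hq : 0 < q) :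
    0 < ∫ γ in Ioi q, pdfSNR m k γb γ := by
  have hfq : IntegrableOn (pdfSNR m k γb) (Ioi q) :=
    (pdfSNR_integrableOn hm hk hγb).mono_set (Ioi_subset_Ioi hq.le)
  have hsub : Ioi q ⊆ Ioi (0:ℝ) := Ioi_subset_Ioi hq.le
  have hnn : 0 ≤ᵐ[volume.restrict (Ioi q)] pdfSNR m k γb :=
    ae_restrict_of_ae_restrict_of_subset hsub (pdfSNR_nonneg_ae hm hk hγb)
  have hpos : ∀ᵐ γ ∂(volume.restrict (Ioi q)), 0 < pdfSNR m k γb γ :=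
    ae_restrict_of_ae_restrict_of_subset hsub (pdfSNR_pos_ae hm hk hγb)
  rw [setIntegral_pos_iff_support_of_nonneg_ae hnn hfq]
  have hzero : (volume.restrict (Ioi q)) ((Function.support (pdfSNR m k γb))ᶜ) = 0 := by
    apply measure_mono_null ?_ (ae_iff.mp hpos)
    intro γ hγ
    simp only [Set.mem_compl_iff, Function.mem_support, not_not] at hγ
    simp [hγ]
  rw [← Measure.restrict_apply' measurableSet_Ioi]
  have huniv : (volume.restrict (Ioi q)) univ = ⊤ := by
    rw [Measure.restrict_apply_univ, Real.volume_Ioi]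
  have htop : (⊤ : ℝ≥0∞) ≤ (volume.restrict (Ioi q)) (Function.support (pdfSNR m k γb)) := by
    calc (⊤ : ℝ≥0∞) = (volume.restrict (Ioi q)) univ := huniv.symm
      _ = (volume.restrict (Ioi q)) (Function.support (pdfSNR m k γb) ∪
            (Function.support (pdfSNR m k γb))ᶜ) := by rw [union_compl_self]
      _ ≤ (volume.restrict (Ioi q)) (Function.support (pdfSNR m k γb)) +
            (volume.restrict (Ioi q)) ((Function.support (pdfSNR m k γb))ᶜ) :=
          measure_union_le _ _
      _ = (volume.restrict (Ioi q)) (Function.support (pdfSNR m k γb)) := by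
          rw [hzero, add_zero]
  exact lt_of_lt_of_le ENNReal.zero_lt_top htop


lemma continuousAt_tail {g : ℝ → ℝ} {p : ℝ} (hp : 0 < p)
    (hg : IntegrableOn g (Ioi (p / 2))) :
    ContinuousAt (fun q => ∫ γ in Ioi q, g γ) p := by
  have hp2 : 0 < p / 2 := by linarith
  have hIcc : IntegrableOn g (Icc (p / 2) (p + 1)) := by
    rw [integrableOn_Icc_iff_integrableOn_Ioc]
    exact hg.mono_set Ioc_subset_Ioi_self
  have hcont := intervalIntegral.continuousOn_primitive (a := p / 2) (b := p + 1)
    (μ := volume) hIcc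
  have hmem : Ioo (p / 2) (p + 1) ∈ nhds p := Ioo_mem_nhds (by linarith) (by linarith)
  have hcontAt : ContinuousAt (fun x => ∫ t in Ioc (p / 2) x, g t) p :=
    (hcont.mono (Ioo_subset_Icc_self)).continuousAt hmem
  have heq : (fun q => (∫ γ in Ioi (p / 2), g γ) - ∫ t in Ioc (p / 2) q, g t) =ᶠ[nhds p]
      (fun q => ∫ γ in Ioi q, g γ) := by
    filter_upwards [hmem] with q hq
    have hI1 : IntegrableOn g (Ioc (p / 2) q) := hg.mono_set Ioc_subset_Ioi_self
    have hI2 : IntegrableOn g (Ioi q) := hg.mono_set (Ioi_subset_Ioi hq.1.le)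
    have hunion := setIntegral_union (Ioc_disjoint_Ioi (le_refl q)) measurableSet_Ioi hI1 hI2
    rw [Ioc_union_Ioi_eq_Ioi hq.1.le] at hunion
    rw [hunion]
    ring
  exact (continuousAt_const.sub hcontAt).congr heq

include hm hk hγb in
lemma strictAntiOn_F :
    StrictAntiOn (fun γ₀ : ℝ => ∫ γ in Ioi γ₀, (1 / γ₀ - 1 / γ) * pdfSNR m k γb γ)
      (Ioi 0) := by
  intro p hp q hq hpq
  have hp' : (0:ℝ) < p := hp
  have hq' : (0:ℝ) < q := hq
  simp only []
  have hWp : IntegrableOn (fun γ => (1 / p - 1 / γ) * pdfSNR m k γb γ) (Ioi p) :=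
    integrableOn_W hm hk hγb hp'
  have hWq : IntegrableOn (fun γ => (1 / q - 1 / γ) * pdfSNR m k γb γ) (Ioi q) :=
    integrableOn_W hm hk hγb hq'
  have hWpq : IntegrableOn (fun γ => (1 / p - 1 / γ) * pdfSNR m k γb γ) (Ioi q) :=
    hWp.mono_set (Ioi_subset_Ioi hpq.le)
  have hWpIoc : IntegrableOn (fun γ => (1 / p - 1 / γ) * pdfSNR m k γb γ) (Ioc p q) :=
    hWp.mono_set Ioc_subset_Ioi_self
  have hsplit := setIntegral_union (Ioc_disjoint_Ioi (le_refl q)) measurableSet_Ioi hWpIoc hWpq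
  rw [Ioc_union_Ioi_eq_Ioi hpq.le] at hsplit
  rw [hsplit]
  have hIoc_nonneg : 0 ≤ ∫ γ in Ioc p q, (1 / p - 1 / γ) * pdfSNR m k γb γ := by
    apply setIntegral_nonneg_of_ae_restrict
    have hnn := pdfSNR_nonneg_ae hm hk hγb
    have hnn' : 0 ≤ᵐ[volume.restrict (Ioc p q)] pdfSNR m k γb :=
      ae_restrict_of_ae_restrict_of_subset (fun y hy => hp'.trans hy.1) hnn
    filter_upwards [hnn', ae_restrict_mem measurableSet_Ioc] with γ hγ hγmem
    have h1 : 1 / γ ≤ 1 / p := one_div_le_one_div_of_le hp' hγmem.1.le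
    exact mul_nonneg (by linarith) hγ
  have hstrict : (∫ γ in Ioi q, (1 / q - 1 / γ) * pdfSNR m k γb γ) <
      ∫ γ in Ioi q, (1 / p - 1 / γ) * pdfSNR m k γb γ := by
    have hdiff : (∫ γ in Ioi q, (1 / p - 1 / γ) * pdfSNR m k γb γ) -
        (∫ γ in Ioi q, (1 / q - 1 / γ) * pdfSNR m k γb γ) =
        (1 / p - 1 / q) * ∫ γ in Ioi q, pdfSNR m k γb γ := by
      calc (∫ γ in Ioi q, (1 / p - 1 / γ) * pdfSNR m k γb γ) -
            (∫ γ in Ioi q, (1 / q - 1 / γ) * pdfSNR m k γb γ)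
          = ∫ γ in Ioi q, ((1 / p - 1 / γ) * pdfSNR m k γb γ -
              (1 / q - 1 / γ) * pdfSNR m k γb γ) := (integral_sub hWpq hWq).symm
        _ = ∫ γ in Ioi q, (1 / p - 1 / q) * pdfSNR m k γb γ := by
            apply setIntegral_congr_fun measurableSet_Ioi
            intro γ _
            ring
        _ = (1 / p - 1 / q) * ∫ γ in Ioi q, pdfSNR m k γb γ := integral_const_mul _ _
    have hcoef : 0 < 1 / p - 1 / q := by
      have := one_div_lt_one_div_of_lt hp' hpq
      linarith
    have hpos := setIntegral_pdfSNR_pos hm hk hγb hq'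
    linarith [mul_pos hcoef hpos]
  linarith


include hm hk hγb in
lemma continuousAt_F {p : ℝ} (hp : 0 < p) :
    ContinuousAt (fun γ₀ : ℝ => ∫ γ in Ioi γ₀, (1 / γ₀ - 1 / γ) * pdfSNR m k γb γ) p := by
  have hp2 : 0 < p / 2 := by linarith
  have hG : ContinuousAt (fun q => ∫ γ in Ioi q, pdfSNR m k γb γ) p :=
    continuousAt_tail hp ((pdfSNR_integrableOn hm hk hγb).mono_set (Ioi_subset_Ioi hp2.le))
  have hH : ContinuousAt (fun q => ∫ γ in Ioi q, 1 / γ * pdfSNR m k γb γ) p :=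
    continuousAt_tail hp (integrableOn_inv_mul hm hk hγb hp2)
  have hquot : ContinuousAt (fun q : ℝ => 1 / q) p :=
    ContinuousAt.div continuousAt_const continuousAt_id (ne_of_gt hp)
  have hcomb := (hquot.mul hG).sub hH
  apply hcomb.congr
  filter_upwards [eventually_gt_nhds (show p / 2 < p by linarith)] with q hq
  have hq' : 0 < q := lt_trans hp2 hq
  have hfq : IntegrableOn (pdfSNR m k γb) (Ioi q) :=
    (pdfSNR_integrableOn hm hk hγb).mono_set (Ioi_subset_Ioi hq'.le)
  have hinv : IntegrableOn (fun γ => 1 / γ * pdfSNR m k γb γ) (Ioi q) :=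
    integrableOn_inv_mul hm hk hγb hq'
  calc 1 / q * (∫ γ in Ioi q, pdfSNR m k γb γ) - ∫ γ in Ioi q, 1 / γ * pdfSNR m k γb γ
      = (∫ γ in Ioi q, 1 / q * pdfSNR m k γb γ) -
          ∫ γ in Ioi q, 1 / γ * pdfSNR m k γb γ := by rw [integral_const_mul]
    _ = ∫ γ in Ioi q, (1 / q * pdfSNR m k γb γ - 1 / γ * pdfSNR m k γb γ) :=
        (integral_sub (hfq.const_mul _) hinv).symm
    _ = ∫ γ in Ioi q, (1 / q - 1 / γ) * pdfSNR m k γb γ := by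
        apply setIntegral_congr_fun measurableSet_Ioi
        intro γ _
        ring

include hm hk hγb in
lemma exists_cutoff :
    ∃ γ₀ : ℝ, 0 < γ₀ ∧ ∫ γ in Ioi γ₀, (1 / γ₀ - 1 / γ) * pdfSNR m k γb γ = 1 := by
  set F := fun γ₀ : ℝ => ∫ γ in Ioi γ₀, (1 / γ₀ - 1 / γ) * pdfSNR m k γb γ with hF
  set I₁ := ∫ γ in Ioi (1:ℝ), pdfSNR m k γb γ with hI₁
  have hI₁pos : 0 < I₁ := setIntegral_pdfSNR_pos hm hk hγb one_pos
  set p₀ := I₁ / (I₁ + 1) with hp₀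
  have hp₀pos : 0 < p₀ := div_pos hI₁pos (by linarith)
  have hp₀lt1 : p₀ < 1 := by
    rw [hp₀, div_lt_one (by linarith)]
    linarith
  have hWnn : ∀ {r : ℝ}, 0 < r → 0 ≤ᵐ[volume.restrict (Ioi r)]
      fun γ => (1 / r - 1 / γ) * pdfSNR m k γb γ := by
    intro r hr
    have hnn : 0 ≤ᵐ[volume.restrict (Ioi r)] pdfSNR m k γb :=
      ae_restrict_of_ae_restrict_of_subset (Ioi_subset_Ioi hr.le) (pdfSNR_nonneg_ae hm hk hγb)
    filter_upwards [hnn, ae_restrict_mem measurableSet_Ioi] with γ hγ hγmem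
    have h1 : 1 / γ ≤ 1 / r := one_div_le_one_div_of_le hr (le_of_lt hγmem)
    exact mul_nonneg (by linarith) hγ
  have hFp₀ : 1 ≤ F p₀ := by
    have hstep1 : (∫ γ in Ioi (1:ℝ), (1 / p₀ - 1 / γ) * pdfSNR m k γb γ) ≤ F p₀ := by
      apply setIntegral_mono_set (integrableOn_W hm hk hγb hp₀pos) (hWnn hp₀pos)
      exact HasSubset.Subset.eventuallyLE (Ioi_subset_Ioi hp₀lt1.le)
    have hstep2 : (∫ γ in Ioi (1:ℝ), (1 / p₀ - 1) * pdfSNR m k γb γ) ≤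
        ∫ γ in Ioi (1:ℝ), (1 / p₀ - 1 / γ) * pdfSNR m k γb γ := by
      apply integral_mono_ae
      · exact ((pdfSNR_integrableOn hm hk hγb).mono_set
          (Ioi_subset_Ioi zero_le_one)).const_mul _
      · exact (integrableOn_W hm hk hγb hp₀pos).mono_set (Ioi_subset_Ioi hp₀lt1.le)
      · have hnn : 0 ≤ᵐ[volume.restrict (Ioi (1:ℝ))] pdfSNR m k γb :=
          ae_restrict_of_ae_restrict_of_subset (Ioi_subset_Ioi zero_le_one)
            (pdfSNR_nonneg_ae hm hk hγb)
        filter_upwards [hnn, ae_restrict_mem measurableSet_Ioi] with γ hγ hγmem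
        have h1 : 1 / γ ≤ 1 := by
          rw [div_le_one (lt_trans one_pos hγmem)]
          exact (le_of_lt hγmem)
        apply mul_le_mul_of_nonneg_right (by linarith) hγ
    have hval : (∫ γ in Ioi (1:ℝ), (1 / p₀ - 1) * pdfSNR m k γb γ) = 1 := by
      rw [integral_const_mul, ← hI₁]
      rw [hp₀, one_div_div]
      field_simp
      ring
    linarith
  set T := ∫ γ in Ioi (0:ℝ), pdfSNR m k γb γ with hT
  have hTnn : 0 ≤ T := setIntegral_nonneg_of_ae_restrict (pdfSNR_nonneg_ae hm hk hγb)
  set q₁ := max (2 * T + 1) (p₀ + 1) with hq₁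
  have hq₁pos : 0 < q₁ := lt_of_lt_of_le (by linarith) (le_max_left _ _)
  have hq₁T : T < q₁ := lt_of_lt_of_le (by linarith) (le_max_left _ _)
  have hq₁p₀ : p₀ + 1 ≤ q₁ := le_max_right _ _
  have hFq₁ : F q₁ < 1 := by
    have hfq : IntegrableOn (pdfSNR m k γb) (Ioi q₁) :=
      (pdfSNR_integrableOn hm hk hγb).mono_set (Ioi_subset_Ioi hq₁pos.le)
    have hstep1 : F q₁ ≤ ∫ γ in Ioi q₁, 1 / q₁ * pdfSNR m k γb γ := by
      apply integral_mono_ae (integrableOn_W hm hk hγb hq₁pos) (hfq.const_mul _)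
      have hnn : 0 ≤ᵐ[volume.restrict (Ioi q₁)] pdfSNR m k γb :=
        ae_restrict_of_ae_restrict_of_subset (Ioi_subset_Ioi hq₁pos.le)
          (pdfSNR_nonneg_ae hm hk hγb)
      filter_upwards [hnn, ae_restrict_mem measurableSet_Ioi] with γ hγ hγmem
      have h1 : 0 < 1 / γ := one_div_pos.mpr (lt_trans hq₁pos hγmem)
      apply mul_le_mul_of_nonneg_right (by linarith) hγ
    have hstep2 : (∫ γ in Ioi q₁, 1 / q₁ * pdfSNR m k γb γ) = 1 / q₁ *
        ∫ γ in Ioi q₁, pdfSNR m k γb γ := integral_const_mul _ _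
    have hstep3 : (∫ γ in Ioi q₁, pdfSNR m k γb γ) ≤ T := by
      apply setIntegral_mono_set (pdfSNR_integrableOn hm hk hγb) (pdfSNR_nonneg_ae hm hk hγb)
      exact HasSubset.Subset.eventuallyLE (Ioi_subset_Ioi hq₁pos.le)
    have hfinal : 1 / q₁ * (∫ γ in Ioi q₁, pdfSNR m k γb γ) < 1 := by
      have h1 : 1 / q₁ * (∫ γ in Ioi q₁, pdfSNR m k γb γ) ≤ 1 / q₁ * T := by
        apply mul_le_mul_of_nonneg_left hstep3 (by positivity)
      have h2 : 1 / q₁ * T < 1 := by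
        rw [div_mul_eq_mul_div, one_mul, div_lt_one hq₁pos]
        exact hq₁T
      linarith
    rw [hstep2] at hstep1
    linarith
  have hp₀q₁ : p₀ ≤ q₁ := by linarith
  have hcontIcc : ContinuousOn F (Icc p₀ q₁) := fun x hx =>
    (continuousAt_F hm hk hγb (lt_of_lt_of_le hp₀pos hx.1)).continuousWithinAt
  have hIVT := intermediate_value_Icc' hp₀q₁ hcontIcc
  have h1mem : (1:ℝ) ∈ Icc (F q₁) (F p₀) := ⟨hFq₁.le, hFp₀⟩
  obtain ⟨c, hcmem, hFc⟩ := hIVT h1mem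
  exact ⟨c, lt_of_lt_of_le hp₀pos hcmem.1, hFc⟩

end main

/-- Existence and uniqueness of the OPRA cutoff SNR `γ₀`, and strict monotonicity of the
cutoff map on `(0,∞)`. -/
theorem opra_cutoff_exists_unique (m k γb : ℝ) (hm : 0 < m) (hk : 0 < k) (hγb : 0 < γb) :
    (∃! γ₀ : ℝ, 0 < γ₀ ∧
      ∫ γ in Ioi γ₀, (1 / γ₀ - 1 / γ) * pdfSNR m k γb γ = 1) ∧
    StrictAntiOn (fun γ₀ : ℝ => ∫ γ in Ioi γ₀, (1 / γ₀ - 1 / γ) * pdfSNR m k γb γ)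
      (Ioi 0) := by
  constructor
  · obtain ⟨c, hc0, hFc⟩ := exists_cutoff hm hk hγb
    refine ⟨c, ⟨hc0, hFc⟩, ?_⟩
    rintro y ⟨hy0, hFy⟩
    exact (strictAntiOn_F hm hk hγb).injOn hy0 hc0 (hFy.trans hFc.symm)
  · exact strictAntiOn_F hm hk hγb
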